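/- arXiv:1811.06242 — 2 statements merged into one kernel-verified Lean document; each statement's English description precedes it below -/
import Mathlib

section
/- Let e_u ∈ V_h and e_p ∈ Q_h satisfy the error equation 2μ⟨ε(e_u), ε(v)⟩ + λ⟨∇·e_u, ∇·v⟩ = α⟨e_p, ∇·v⟩ for all v ∈ V_h. Then 2μ‖ε(e_u)‖² + λ‖∇·e_u‖² ≤ (α²/K_dr)‖e_p‖², where K_dr > 0 is any constant with 2μ‖ε(v)‖² + λ‖∇·v‖² ≥ K_dr‖∇·v‖² for all v ∈ V_h. -/
open RealInnerProductSpace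

/-!
Testing the error equation with `v = e_u` shows that the elastic energy `E` of `e_u` equals
`α⟨e_p, ∇·e_u⟩ ≤ |α| ‖e_p‖ ‖∇·e_u‖`, while coercivity gives `K_dr ‖∇·e_u‖² ≤ E`.
Young's inequality then absorbs `‖∇·e_u‖` into `E`.
-/

theorem le_sq_div_of_mul_sq_le_of_le_mul {E a b K : ℝ} (hK : 0 < K)
    (hcoerc : K * b ^ 2 ≤ E) (hbound : E ≤ a * b) : E ≤ a ^ 2 / K := by
  -- Young: `a b ≤ a² / (2K) + K b² / 2 ≤ a² / (2K) + E / 2`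
  rw [le_div_iff₀ hK]
  nlinarith [sq_nonneg (a - K * b), mul_le_mul_of_nonneg_left hbound hK.le]

theorem fixed_stress_displacement_error_bound_general
    {V Q E : Type*} [AddCommGroup V] [Module ℝ V]
    [NormedAddCommGroup Q] [InnerProductSpace ℝ Q]
    [NormedAddCommGroup E] [InnerProductSpace ℝ E]
    (eps : V →ₗ[ℝ] E) (div : V →ₗ[ℝ] Q)
    (μ lam α Kdr : ℝ) (hK : 0 < Kdr)
    (Vh : Submodule ℝ V)
    (hcoerc : ∀ v ∈ Vh, Kdr * ‖div v‖ ^ 2 ≤ 2 * μ * ‖eps v‖ ^ 2 + lam * ‖div v‖ ^ 2)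
    (eu : V) (ep : Q) (heu : eu ∈ Vh)
    (herr : ∀ v ∈ Vh,
      2 * μ * ⟪eps eu, eps v⟫ + lam * ⟪div eu, div v⟫ = α * ⟪ep, div v⟫) :
    2 * μ * ‖eps eu‖ ^ 2 + lam * ‖div eu‖ ^ 2 ≤ α ^ 2 / Kdr * ‖ep‖ ^ 2 := by
  have henergy : 2 * μ * ‖eps eu‖ ^ 2 + lam * ‖div eu‖ ^ 2 = α * ⟪ep, div eu⟫ := by
    simpa only [real_inner_self_eq_norm_sq] using herr eu heu
  have hbound : α * ⟪ep, div eu⟫ ≤ |α| * ‖ep‖ * ‖div eu‖ := by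
    rw [mul_assoc]
    calc α * ⟪ep, div eu⟫ ≤ |α| * |⟪ep, div eu⟫| := abs_mul α _ ▸ le_abs_self _
      _ ≤ |α| * (‖ep‖ * ‖div eu‖) := by gcongr; exact abs_real_inner_le_norm _ _
  calc 2 * μ * ‖eps eu‖ ^ 2 + lam * ‖div eu‖ ^ 2
      ≤ (|α| * ‖ep‖) ^ 2 / Kdr :=
        le_sq_div_of_mul_sq_le_of_le_mul hK (hcoerc eu heu) (henergy ▸ hbound)
    _ = α ^ 2 / Kdr * ‖ep‖ ^ 2 := by rw [mul_pow, sq_abs]; ring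

/-- Displacement error bound of the fixed-stress splitting: if the iteration errors
`e_u ∈ V_h`, `e_p ∈ Q_h` satisfy the elasticity error equation
`2μ⟨ε(e_u), ε(v)⟩ + λ⟨∇·e_u, ∇·v⟩ = α⟨e_p, ∇·v⟩` for all `v ∈ V_h`, then
`2μ‖ε(e_u)‖² + λ‖∇·e_u‖² ≤ (α²/K_dr)‖e_p‖²`, where `K_dr > 0` is a coercivity constant of
the elastic energy with respect to `‖∇·(·)‖²` on `V_h`. -/
theorem fixed_stress_displacement_error_bound
    {V Q E : Type*} [AddCommGroup V] [Module ℝ V]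
    [NormedAddCommGroup Q] [InnerProductSpace ℝ Q]
    [NormedAddCommGroup E] [InnerProductSpace ℝ E]
    (eps : V →ₗ[ℝ] E) (div : V →ₗ[ℝ] Q)
    (μ lam α Kdr : ℝ) (hμ : 0 < μ) (hlam : 0 < lam) (hα : 0 < α) (hK : 0 < Kdr)
    (Vh : Submodule ℝ V) (Qh : Submodule ℝ Q)
    (hcoerc : ∀ v ∈ Vh, Kdr * ‖div v‖ ^ 2 ≤ 2 * μ * ‖eps v‖ ^ 2 + lam * ‖div v‖ ^ 2)
    (eu : V) (ep : Q) (heu : eu ∈ Vh) (hep : ep ∈ Qh)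
    (herr : ∀ v ∈ Vh,
      2 * μ * ⟪eps eu, eps v⟫ + lam * ⟪div eu, div v⟫ = α * ⟪ep, div v⟫) :
    2 * μ * ‖eps eu‖ ^ 2 + lam * ‖div eu‖ ^ 2 ≤ α ^ 2 / Kdr * ‖ep‖ ^ 2 :=
  fixed_stress_displacement_error_bound_general eps div μ lam α Kdr hK Vh hcoerc eu ep heu herr
end

section
/- Suppose the inf-sup lifting property holds: for every p ∈ Q_h there is v ∈ V_h with ⟨∇·v, q⟩ = ⟨p, q⟩ for all q ∈ Q_h and 2μ‖ε(v)‖² + λ‖∇·v‖² ≤ β‖p‖². If e_u ∈ V_h, e_p ∈ Q_h satisfy 2μ⟨ε(e_u), ε(w)⟩ + λ⟨∇·e_u, ∇·w⟩ = α⟨e_p, ∇·w⟩ for all w ∈ V_h, then (α²/β)‖e_p‖² ≤ 2μ‖ε(e_u)‖² + λ‖∇·e_u‖². -/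
/-!
Testing the error equation with the inf-sup lift `v` of `e_p` gives `α‖e_p‖² = a(e_u, v)` for the
energy form `a(u, w) = 2μ⟨ε u, ε w⟩ + λ⟨∇·u, ∇·w⟩`. Cauchy–Schwarz for `a` and `a(v, v) ≤ β‖e_p‖²`
then give `α²‖e_p‖⁴ ≤ a(e_u, e_u) · β‖e_p‖²`.
-/

open RealInnerProductSpace

theorem sq_smul_inner_add_smul_inner_le {E F : Type*}
    [NormedAddCommGroup E] [InnerProductSpace ℝ E] [NormedAddCommGroup F] [InnerProductSpace ℝ F]
    {a b : ℝ} (ha : 0 ≤ a) (hb : 0 ≤ b) (x y : E) (x' y' : F) :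
    (a * ⟪x, y⟫ + b * ⟪x', y'⟫) ^ 2 ≤
      (a * ‖x‖ ^ 2 + b * ‖x'‖ ^ 2) * (a * ‖y‖ ^ 2 + b * ‖y'‖ ^ 2) := by
  have hE := abs_real_inner_le_norm x y
  have hF := abs_real_inner_le_norm x' y'
  have habs : |a * ⟪x, y⟫ + b * ⟪x', y'⟫| ≤ a * (‖x‖ * ‖y‖) + b * (‖x'‖ * ‖y'‖) :=
    calc |a * ⟪x, y⟫ + b * ⟪x', y'⟫| ≤ a * |⟪x, y⟫| + b * |⟪x', y'⟫| := by
          simpa only [abs_mul, abs_of_nonneg ha, abs_of_nonneg hb] using abs_add_le (a * ⟪x, y⟫) (b * ⟪x', y'⟫)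
      _ ≤ a * (‖x‖ * ‖y‖) + b * (‖x'‖ * ‖y'‖) := by gcongr
  calc (a * ⟪x, y⟫ + b * ⟪x', y'⟫) ^ 2
      ≤ (a * (‖x‖ * ‖y‖) + b * (‖x'‖ * ‖y'‖)) ^ 2 := sq_le_sq' (abs_le.mp habs).1 (abs_le.mp habs).2
    _ ≤ (a * ‖x‖ ^ 2 + b * ‖x'‖ ^ 2) * (a * ‖y‖ ^ 2 + b * ‖y'‖ ^ 2) := by
      nlinarith [mul_nonneg (mul_nonneg ha hb) (sq_nonneg (‖x‖ * ‖y'‖ - ‖x'‖ * ‖y‖))]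

theorem div_mul_le_of_sq_mul_le {α β t A : ℝ} (hβ : 0 < β) (ht : 0 ≤ t) (hA : 0 ≤ A)
    (h : (α * t) ^ 2 ≤ A * (β * t)) : α ^ 2 / β * t ≤ A := by
  rcases ht.eq_or_lt with rfl | ht
  · simpa using hA
  · rw [div_mul_eq_mul_div, div_le_iff₀ hβ]
    nlinarith

theorem pressure_error_lower_bound_general
    {V Q E : Type*} [AddCommGroup V] [Module ℝ V]
    [NormedAddCommGroup Q] [InnerProductSpace ℝ Q]
    [NormedAddCommGroup E] [InnerProductSpace ℝ E]
    (eps : V →ₗ[ℝ] E) (div : V →ₗ[ℝ] Q)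
    (μ lam α β : ℝ) (hμ : 0 < μ) (hlam : 0 < lam) (hβ : 0 < β)
    (Vh : Submodule ℝ V) (Qh : Submodule ℝ Q)
    (hlift : ∀ p ∈ Qh, ∃ v ∈ Vh,
      (∀ q ∈ Qh, ⟪div v, q⟫ = ⟪p, q⟫) ∧
      2 * μ * ‖eps v‖ ^ 2 + lam * ‖div v‖ ^ 2 ≤ β * ‖p‖ ^ 2)
    (eu : V) (ep : Q) (hep : ep ∈ Qh)
    (herr : ∀ w ∈ Vh,
      2 * μ * ⟪eps eu, eps w⟫ + lam * ⟪div eu, div w⟫ = α * ⟪ep, div w⟫) :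
    α ^ 2 / β * ‖ep‖ ^ 2 ≤ 2 * μ * ‖eps eu‖ ^ 2 + lam * ‖div eu‖ ^ 2 := by
  obtain ⟨v, hv, hortho, henergy⟩ := hlift ep hep
  have htest : 2 * μ * ⟪eps eu, eps v⟫ + lam * ⟪div eu, div v⟫ = α * ‖ep‖ ^ 2 := by
    rw [herr v hv, real_inner_comm, hortho ep hep, real_inner_self_eq_norm_sq]
  have h2μ : 0 ≤ 2 * μ := by positivity
  refine div_mul_le_of_sq_mul_le hβ (by positivity) (by positivity) ?_
  calc (α * ‖ep‖ ^ 2) ^ 2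
      ≤ (2 * μ * ‖eps eu‖ ^ 2 + lam * ‖div eu‖ ^ 2) *
          (2 * μ * ‖eps v‖ ^ 2 + lam * ‖div v‖ ^ 2) := by
        rw [← htest]
        exact sq_smul_inner_add_smul_inner_le h2μ hlam.le _ _ _ _
    _ ≤ (2 * μ * ‖eps eu‖ ^ 2 + lam * ‖div eu‖ ^ 2) * (β * ‖ep‖ ^ 2) := by gcongr

/-- Lower bound of the pressure error by the elastic energy of the displacement error:
if the inf-sup lifting property holds (every `p ∈ Q_h` admits `v ∈ V_h` with
`⟨∇·v, q⟩ = ⟨p, q⟩` for all `q ∈ Q_h` and `2μ‖ε(v)‖² + λ‖∇·v‖² ≤ β‖p‖²`), and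
`e_u ∈ V_h`, `e_p ∈ Q_h` satisfy the elasticity error equation, then
`(α²/β)‖e_p‖² ≤ 2μ‖ε(e_u)‖² + λ‖∇·e_u‖²`. -/
theorem pressure_error_lower_bound
    {V Q E : Type*} [AddCommGroup V] [Module ℝ V]
    [NormedAddCommGroup Q] [InnerProductSpace ℝ Q]
    [NormedAddCommGroup E] [InnerProductSpace ℝ E]
    (eps : V →ₗ[ℝ] E) (div : V →ₗ[ℝ] Q)
    (μ lam α β : ℝ) (hμ : 0 < μ) (hlam : 0 < lam) (hα : 0 < α) (hβ : 0 < β)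
    (Vh : Submodule ℝ V) (Qh : Submodule ℝ Q)
    (hlift : ∀ p ∈ Qh, ∃ v ∈ Vh,
      (∀ q ∈ Qh, ⟪div v, q⟫ = ⟪p, q⟫) ∧
      2 * μ * ‖eps v‖ ^ 2 + lam * ‖div v‖ ^ 2 ≤ β * ‖p‖ ^ 2)
    (eu : V) (ep : Q) (heu : eu ∈ Vh) (hep : ep ∈ Qh)
    (herr : ∀ w ∈ Vh,
      2 * μ * ⟪eps eu, eps w⟫ + lam * ⟪div eu, div w⟫ = α * ⟪ep, div w⟫) :
    α ^ 2 / β * ‖ep‖ ^ 2 ≤ 2 * μ * ‖eps eu‖ ^ 2 + lam * ‖div eu‖ ^ 2 :=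
  pressure_error_lower_bound_general eps div μ lam α β hμ hlam hβ Vh Qh hlift eu ep hep herr
end
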